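/- arXiv:2201.02050 — 10 statements merged into one kernel-verified Lean document; each statement's English description precedes it below -/
import Mathlib

section
/- Let A, B, C be affinely independent points in ℝ², and let t, u be real numbers in [0,1] with t + u = 1. Set D = B + t•(C − B), F = B + u•(A − B), and E = D + (F − B) (so that BDEF is a parallelogram with D on segment BC, F on segment AB, and E on line CA). Then the area of the parallelogram BDEF satisfies |det(D − B, F − B)| ≤ (1/2) · |det(C − B, A − B)| / 2, i.e. the parallelogram's area is at most half the area of triangle ABC; moreover equality holds if and only if t = 1/2. -/
/-!
The sides of `BDEF` are `t • (C - B)` and `u • (A - B)`, so by bilinearity of `det2` the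
parallelogram has `t * u` times the area of the parallelogram spanned by the triangle, which is
twice the triangle. Since `t + u = 1`, `t * u = 1/4 - (t - 1/2)^2 ≤ 1/4`, with equality exactly at
`t = 1/2`; affine independence makes the triangle's area nonzero, so the equality case transfers.
-/

def det2 (v w : ℝ × ℝ) : ℝ := v.1 * w.2 - v.2 * w.1

theorem det2_smul_smul (a b : ℝ) (v w : ℝ × ℝ) : det2 (a • v) (b • w) = a * b * det2 v w := by
  simp only [det2, Prod.smul_fst, Prod.smul_snd, smul_eq_mul]
  ring

theorem det2_ne_zero_of_linearIndependent {v w : ℝ × ℝ} (h : LinearIndependent ℝ ![v, w]) :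
    det2 v w ≠ 0 := by
  intro hvw
  rw [LinearIndependent.pair_iff] at h
  have h₂ := h w.2 (-v.2) (Prod.ext (by simp [det2] at hvw ⊢; linarith) (by simp; ring))
  have h₁ := h w.1 (-v.1) (Prod.ext (by simp; ring) (by simp [det2] at hvw ⊢; linarith))
  have hv : v = 0 := Prod.ext (neg_eq_zero.mp h₁.2) (neg_eq_zero.mp h₂.2)
  simpa [hv] using h 1 0

theorem AffineIndependent.linearIndependent_sub_pair {k V : Type*} [Ring k] [AddCommGroup V]
    [Module k V] {p₀ p₁ p₂ : V} (h : AffineIndependent k ![p₀, p₁, p₂]) :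
    LinearIndependent k ![p₂ - p₁, p₀ - p₁] := by
  rw [LinearIndependent.pair_iff]
  intro s t hst
  have hcomb : ∑ i, ![t, -(s + t), s] i • ![p₀, p₁, p₂] i = s • (p₂ - p₁) + t • (p₀ - p₁) := by
    simp only [Fin.sum_univ_three, Matrix.cons_val_zero, Matrix.cons_val_one, Matrix.cons_val,
      neg_add_rev, add_smul, neg_smul, smul_sub]
    abel
  have hw := h.eq_zero_of_sum_eq_zero (s := Finset.univ) (by simp [Fin.sum_univ_three])
    (hcomb.trans hst)
  exact ⟨by simpa using hw 2, by simpa using hw 0⟩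

theorem mul_le_quarter_of_add_eq_one {t u : ℝ} (htu : t + u = 1) : t * u ≤ 1 / 4 := by
  nlinarith [sq_nonneg (t - u)]

theorem mul_eq_quarter_iff_of_add_eq_one {t u : ℝ} (htu : t + u = 1) :
    t * u = 1 / 4 ↔ t = 1 / 2 := by
  obtain rfl : u = 1 - t := by linarith
  rw [← sub_eq_zero, show t * (1 - t) - 1 / 4 = -(t - 1 / 2) ^ 2 by ring, neg_eq_zero,
    sq_eq_zero_iff, sub_eq_zero]

theorem stmt0_general (A B C : ℝ × ℝ) (hABC : AffineIndependent ℝ ![A, B, C])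
    (t u : ℝ) (ht : t ∈ Set.Icc (0:ℝ) 1) (hu : u ∈ Set.Icc (0:ℝ) 1)
    (htu : t + u = 1)
    (D F : ℝ × ℝ)
    (hD : D = B + t • (C - B))
    (hF : F = B + u • (A - B)) :
    |det2 (D - B) (F - B)| ≤ |det2 (C - B) (A - B)| / 2 / 2 ∧
      (|det2 (D - B) (F - B)| = |det2 (C - B) (A - B)| / 2 / 2 ↔ t = 1/2) := by
  have hK : 0 < |det2 (C - B) (A - B)| :=
    abs_pos.mpr (det2_ne_zero_of_linearIndependent hABC.linearIndependent_sub_pair)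
  have harea : |det2 (D - B) (F - B)| = t * u * |det2 (C - B) (A - B)| := by
    rw [hD, hF, add_sub_cancel_left, add_sub_cancel_left, det2_smul_smul, abs_mul,
      abs_of_nonneg (mul_nonneg ht.1 hu.1)]
  rw [harea, show |det2 (C - B) (A - B)| / 2 / 2 = 1 / 4 * |det2 (C - B) (A - B)| by ring,
    mul_left_inj' hK.ne', mul_eq_quarter_iff_of_add_eq_one htu]
  exact ⟨mul_le_mul_of_nonneg_right (mul_le_quarter_of_add_eq_one htu) hK.le, Iff.rfl⟩

/-- Puzzle 1 (Euclid's Maximum Problem): an inscribed parallelogram `BDEF`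
with sides parallel to two sides of triangle `ABC` has area at most half
the triangle's area, with equality iff `t = 1/2`. -/
theorem stmt0 (A B C : ℝ × ℝ) (hABC : AffineIndependent ℝ ![A, B, C])
    (t u : ℝ) (ht : t ∈ Set.Icc (0:ℝ) 1) (hu : u ∈ Set.Icc (0:ℝ) 1)
    (htu : t + u = 1)
    (D F E : ℝ × ℝ)
    (hD : D = B + t • (C - B))
    (hF : F = B + u • (A - B))
    (hE : E = D + (F - B)) :
    |det2 (D - B) (F - B)| ≤ |det2 (C - B) (A - B)| / 2 / 2 ∧
      (|det2 (D - B) (F - B)| = |det2 (C - B) (A - B)| / 2 / 2 ↔ t = 1/2) :=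
  stmt0_general A B C hABC t u ht hu htu D F hD hF
end

section
/- Let a, h, p be real numbers with a > 0, h > 0 and 0 ≤ p ≤ a, and let T ⊂ ℝ² be the convex hull of the three points (0,0), (a,0), (p,h). If x₁ ≤ x₂ and y ≥ 0 are real numbers such that the closed rectangle [x₁, x₂] × [0, y] is contained in T, then (x₂ − x₁) · y ≤ a·h/4, i.e. any rectangle with one side on the base of the triangle that is contained in the triangle has area at most half the triangle's area. -/
/-- Puzzle 2: any rectangle contained in a triangle with one side on the base
of the triangle has area at most half the triangle's area, i.e. at most
`a * h / 4`. -/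
theorem stmt3 (a h p : ℝ) (ha : 0 < a) (hh : 0 < h) (hp0 : 0 ≤ p) (hpa : p ≤ a)
    (T : Set (ℝ × ℝ)) (hT : T = convexHull ℝ {((0:ℝ), (0:ℝ)), (a, 0), (p, h)})
    (x₁ x₂ y : ℝ) (hx : x₁ ≤ x₂) (hy : 0 ≤ y)
    (hsub : Set.Icc x₁ x₂ ×ˢ Set.Icc (0:ℝ) y ⊆ T) :
    (x₂ - x₁) * y ≤ a * h / 4 := by
  set S : Set (ℝ × ℝ) :=
    {q | q.2 ≤ h ∧ p * q.2 ≤ q.1 * h ∧ (a - p) * q.2 ≤ (a - q.1) * h} with hS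
  have hconv : Convex ℝ S := by
    intro q hq r hr s t hs ht hst
    have hst' : s * (a * h) + t * (a * h) = a * h := by rw [← add_mul, hst, one_mul]
    have hst'' : s * h + t * h = h := by rw [← add_mul, hst, one_mul]
    refine ⟨?_, ?_, ?_⟩ <;> simp only [Prod.fst_add, Prod.snd_add, Prod.smul_fst,
      Prod.smul_snd, smul_eq_mul] <;> nlinarith [mul_le_mul_of_nonneg_left hq.1 hs, mul_le_mul_of_nonneg_left hr.1 ht,
      mul_le_mul_of_nonneg_left hq.2.1 hs, mul_le_mul_of_nonneg_left hr.2.1 ht,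
      mul_le_mul_of_nonneg_left hq.2.2 hs, mul_le_mul_of_nonneg_left hr.2.2 ht, hst', hst'']
  have hTS : T ⊆ S := by
    rw [hT]
    apply convexHull_min _ hconv
    intro q hq
    simp only [Set.mem_insert_iff, Set.mem_singleton_iff] at hq
    rcases hq with rfl | rfl | rfl <;> refine ⟨?_, ?_, ?_⟩ <;> simp <;> nlinarith
  have h1 : ((x₁, y) : ℝ × ℝ) ∈ S :=
    hTS (hsub (Set.mk_mem_prod ⟨le_refl _, hx⟩ ⟨hy, le_refl _⟩))
  have h2 : ((x₂, y) : ℝ × ℝ) ∈ S :=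
    hTS (hsub (Set.mk_mem_prod ⟨hx, le_refl _⟩ ⟨hy, le_refl _⟩))
  obtain ⟨hyh, hl, -⟩ := h1
  obtain ⟨-, -, hr⟩ := h2
  simp only at hyh hl hr
  nlinarith [sq_nonneg (h - 2*y), mul_nonneg hy (sub_nonneg.2 hyh)]
end

section
/- Let h and a be positive real numbers. Then (h·a/(h + a))² ≤ h·a/4, and equality holds if and only if h = a. -/
/-- Puzzle 4: the inscribed square on a side is at most as large as the
maximum inscribed rectangle on the same side, with equality iff `h = a`. -/
theorem stmt5 (h a : ℝ) (hh : 0 < h) (ha : 0 < a) :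
    (h * a / (h + a)) ^ 2 ≤ h * a / 4 ∧
      ((h * a / (h + a)) ^ 2 = h * a / 4 ↔ h = a) := by
  have hs : 0 < h + a := by linarith
  have key : h * a / 4 - (h * a / (h + a)) ^ 2
      = h * a * (h - a) ^ 2 / (4 * (h + a) ^ 2) := by
    field_simp
    ring
  have hpos : 0 < 4 * (h + a) ^ 2 := by positivity
  constructor
  · nlinarith [sq_nonneg (h - a), div_nonneg (by positivity : (0:ℝ) ≤ h * a * (h - a) ^ 2) hpos.le]
  · constructor
    · intro heq
      have : h * a * (h - a) ^ 2 / (4 * (h + a) ^ 2) = 0 := by linarith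
      have h0 : h * a * (h - a) ^ 2 = 0 := by
        field_simp at this; linarith [this]
      have : (h - a) ^ 2 = 0 := by
        rcases mul_eq_zero.mp h0 with h1 | h2
        · nlinarith
        · exact h2
      have := pow_eq_zero_iff (n := 2) (by norm_num) |>.mp this
      linarith
    · intro heq
      subst heq
      have h0 : h * h * (h - h) ^ 2 / (4 * (h + h) ^ 2) = 0 := by
        rw [show ((h - h) ^ 2) = 0 from by ring]; ring
      linarith [key]
end

section
/- Let a, b, h_a, h_b be positive real numbers with a > b, a·h_a = b·h_b, and b > h_a. Then a + h_a > b + h_b. -/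
/-- Key lemma of Puzzle 5: for sides `a > b` of an acute triangle with
corresponding heights `h_a`, `h_b`, one has `a + h_a > b + h_b`. -/
theorem stmt6 (a b ha hb : ℝ) (hapos : 0 < a) (hbpos : 0 < b)
    (hhapos : 0 < ha) (hhbpos : 0 < hb)
    (hab : a > b) (harea : a * ha = b * hb) (hbha : b > ha) :
    a + ha > b + hb := by
  nlinarith [mul_pos (sub_pos.2 hab) (sub_pos.2 hbha)]
end

section
/- Let a, b, h_a, h_b be positive real numbers with a > b, a·h_a = b·h_b, and b > h_a. Then a·h_a/(a + h_a) < b·h_b/(b + h_b). -/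
/-- Puzzle 5: in an acute triangle, the inscribed square on the longer side
is smaller: if `a > b` then `s_a < s_b`. -/
theorem stmt7 (a b ha hb : ℝ) (hapos : 0 < a) (hbpos : 0 < b)
    (hhapos : 0 < ha) (hhbpos : 0 < hb)
    (hab : a > b) (harea : a * ha = b * hb) (hbha : b > ha) :
    a * ha / (a + ha) < b * hb / (b + hb) := by
  rw [harea]
  apply div_lt_div_of_pos_left (by positivity) (by positivity)
  nlinarith [mul_pos hbpos (sub_pos.mpr hbha), sub_pos.mpr hab]
end

section
/- Let b > 0 and let θ be a real number with 0 < θ < π/2. Then (b·sin θ/(sin θ + cos θ))² ≤ (b²/4)·tan θ, with equality if and only if θ = π/4. -/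
/-- Puzzle 9: the maximum wedged rectangle on a side is at least as large as
the wedged square on the same side, with equality exactly when `θ = π/4`. -/
theorem stmt11 (b θ : ℝ) (hb : 0 < b) (hθ0 : 0 < θ) (hθ1 : θ < Real.pi / 2) :
    (b * Real.sin θ / (Real.sin θ + Real.cos θ)) ^ 2 ≤ b ^ 2 / 4 * Real.tan θ ∧
      ((b * Real.sin θ / (Real.sin θ + Real.cos θ)) ^ 2 = b ^ 2 / 4 * Real.tan θ ↔
        θ = Real.pi / 4) := by
  have hs : 0 < Real.sin θ := Real.sin_pos_of_pos_of_lt_pi hθ0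
    (hθ1.trans (by linarith [Real.pi_pos]))
  have hc : 0 < Real.cos θ := Real.cos_pos_of_mem_Ioo ⟨by linarith, hθ1⟩
  have hsc : 0 < Real.sin θ + Real.cos θ := by linarith
  set s := Real.sin θ
  set c := Real.cos θ
  have htan : Real.tan θ = s / c := Real.tan_eq_sin_div_cos θ
  have hrhs : b ^ 2 / 4 * (s / c) = b ^ 2 * s / (4 * c) := by ring
  have key : (b * s / (s + c)) ^ 2 ≤ b ^ 2 / 4 * (s / c) := by
    rw [hrhs, div_pow, div_le_div_iff₀ (by positivity) (by positivity)]
    nlinarith [mul_nonneg (mul_nonneg (sq_nonneg b) hs.le) (sq_nonneg (s - c))]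
  constructor
  · rw [htan]; exact key
  · constructor
    · intro h
      rw [htan, hrhs, div_pow, div_eq_div_iff (by positivity) (by positivity)] at h
      have h3 : b ^ 2 * s * (s - c) ^ 2 = 0 := by linear_combination -h
      have h4 : (s - c) ^ 2 = 0 := by
        rcases mul_eq_zero.1 h3 with h' | h'
        · exact absurd h' (by positivity)
        · exact h'
      have heq : s = c := by
        have := pow_eq_zero_iff (n := 2) (by norm_num) |>.1 h4
        linarith
      have htan1 : Real.tan θ = 1 := by rw [htan, heq, div_self hc.ne']
      have hmem : θ ∈ Set.Ioo (-(Real.pi / 2)) (Real.pi / 2) := ⟨by linarith [Real.pi_pos], hθ1⟩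
      have hmem4 : Real.pi / 4 ∈ Set.Ioo (-(Real.pi / 2)) (Real.pi / 2) :=
        ⟨by linarith [Real.pi_pos], by linarith [Real.pi_pos]⟩
      exact Real.injOn_tan hmem hmem4 (by rw [htan1, Real.tan_pi_div_four])
    · intro h
      subst h
      have hs4 : s = c := by
        show Real.sin _ = Real.cos _
        rw [Real.sin_pi_div_four, Real.cos_pi_div_four]
      rw [htan, hs4, div_self hc.ne', mul_one]
      rw [div_pow]
      rw [div_eq_div_iff (by positivity) (by norm_num)]
      ring
end

section
/- Let B and C be real numbers with 0 < C < B and B + C < π/2. Then (sin B)²·tan C > (sin C)²·tan B. -/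
/-- Puzzle 8 (trigonometric form): for acute angles `C < B` with
`B + C < π/2`, one has `sin² B · tan C > sin² C · tan B`. -/
theorem stmt12 (B C : ℝ) (hC : 0 < C) (hCB : C < B) (hBC : B + C < Real.pi / 2) :
    Real.sin B ^ 2 * Real.tan C > Real.sin C ^ 2 * Real.tan B := by
  have hB : 0 < B := hC.trans hCB
  have hB2 : B < Real.pi / 2 := by linarith
  have hC2 : C < Real.pi / 2 := by linarith
  have hcB : 0 < Real.cos B := Real.cos_pos_of_mem_Ioo ⟨by linarith [Real.pi_pos], hB2⟩
  have hcC : 0 < Real.cos C := Real.cos_pos_of_mem_Ioo ⟨by linarith [Real.pi_pos], hC2⟩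
  have hsB : 0 < Real.sin B := Real.sin_pos_of_pos_of_lt_pi hB (by linarith [Real.pi_pos])
  have hsC : 0 < Real.sin C := Real.sin_pos_of_pos_of_lt_pi hC (by linarith [Real.pi_pos])
  -- sin 2B > sin 2C
  have key : Real.sin C * Real.cos C < Real.sin B * Real.cos B := by
    have h1 : Real.sin (2 * B) - Real.sin (2 * C) =
        2 * Real.sin ((2 * B - 2 * C) / 2) * Real.cos ((2 * B + 2 * C) / 2) :=
      Real.sin_sub_sin _ _
    have h2 : 0 < Real.sin (B - C) :=
      Real.sin_pos_of_pos_of_lt_pi (by linarith) (by linarith [Real.pi_pos])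
    have h3 : 0 < Real.cos (B + C) :=
      Real.cos_pos_of_mem_Ioo ⟨by linarith [Real.pi_pos], hBC⟩
    have h4 : Real.sin (2 * C) < Real.sin (2 * B) := by
      have : (2 * B - 2 * C) / 2 = B - C := by ring
      rw [this] at h1
      have : (2 * B + 2 * C) / 2 = B + C := by ring
      rw [this] at h1
      nlinarith
    rw [Real.sin_two_mul, Real.sin_two_mul] at h4
    linarith
  rw [Real.tan_eq_sin_div_cos, Real.tan_eq_sin_div_cos, gt_iff_lt, mul_div_assoc', mul_div_assoc', div_lt_div_iff₀ hcB hcC]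
  nlinarith [mul_pos hsB hsC, mul_lt_mul_of_pos_left key (mul_pos hsB hsC)]
end

section
/- Let a be a real number with √2 < a < 2, and set h = √(1 − a²/4). If a·h/(a + h) = h/(h + a/2), then 2a³ − 2a² − 3a + 2 = 0. -/
/-!
Clearing denominators in `a h / (a + h) = h / (h + a / 2)` and cancelling `h` leaves the linear
relation `h (a - 1) = a - a² / 2`. Squaring it and substituting `h² = 1 - a² / 4` gives
`(2 - a) (2a³ - 2a² - 3a + 2) = 0`, and `a ≠ 2`.
-/

lemma mul_sub_one_eq_of_div_eq_div {a h : ℝ} (ha : 0 < a) (hh : 0 < h)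
    (heq : a * h / (a + h) = h / (h + a / 2)) : h * (a - 1) = a - a ^ 2 / 2 := by
  rw [div_eq_div_iff (by positivity) (by positivity)] at heq
  have hcancel : h * (a * h + a ^ 2 / 2) = h * (a + h) := by linear_combination heq
  linear_combination mul_left_cancel₀ hh.ne' hcancel

lemma calabi_cubic_of_mul_sub_one_eq {a h : ℝ} (hsq : h ^ 2 = 1 - a ^ 2 / 4) (ha : a ≠ 2)
    (hlin : h * (a - 1) = a - a ^ 2 / 2) : 2 * a ^ 3 - 2 * a ^ 2 - 3 * a + 2 = 0 := by
  have hprod : (2 - a) * (2 * a ^ 3 - 2 * a ^ 2 - 3 * a + 2) = 0 := by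
    linear_combination (4 * (h * (a - 1) + (a - a ^ 2 / 2))) * hlin - 4 * (a - 1) ^ 2 * hsq
  exact (mul_eq_zero.mp hprod).resolve_left (sub_ne_zero.mpr ha.symm)

/-- Puzzle 10: for the isosceles obtuse triangle with legs 1 and base `a`,
equality of the wedged square on the base with those on the legs forces the
Calabi cubic `2a³ − 2a² − 3a + 2 = 0`. -/
theorem stmt14 (a h : ℝ) (ha1 : Real.sqrt 2 < a) (ha2 : a < 2)
    (hh : h = Real.sqrt (1 - a ^ 2 / 4))
    (heq : a * h / (a + h) = h / (h + a / 2)) :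
    2 * a ^ 3 - 2 * a ^ 2 - 3 * a + 2 = 0 := by
  have ha0 : 0 < a := (Real.sqrt_nonneg 2).trans_lt ha1
  have hrad : 0 < 1 - a ^ 2 / 4 := by nlinarith
  have hpos : 0 < h := hh ▸ Real.sqrt_pos.mpr hrad
  have hsq : h ^ 2 = 1 - a ^ 2 / 4 := hh ▸ Real.sq_sqrt hrad.le
  exact calabi_cubic_of_mul_sub_one_eq hsq ha2.ne (mul_sub_one_eq_of_div_eq_div ha0 hpos heq)
end

section
/- There exists a real number a with √2 < a < 2 such that, setting h = √(1 − a²/4), one has a·h/(a + h) = h/(h + a/2). In other words, there is an isosceles obtuse triangle with legs of length 1 and base a whose wedged square on the base has the same side length as the wedged squares on the legs. -/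
/-- Calabi's 'catastrophe' (Example 2): there is an isosceles obtuse triangle
with legs 1 and base `a` whose wedged square on the base has the same side
length as the wedged squares on the legs. -/
theorem stmt16 :
    ∃ a : ℝ, Real.sqrt 2 < a ∧ a < 2 ∧
      (let h := Real.sqrt (1 - a ^ 2 / 4)
       a * h / (a + h) = h / (h + a / 2)) := by
  have hcont : ContinuousOn (fun x : ℝ => 2*x^3 - 2*x^2 - 3*x + 2) (Set.Icc 1.5 1.6) :=
    (by continuity : Continuous fun x : ℝ => 2*x^3 - 2*x^2 - 3*x + 2).continuousOn
  have hiv := intermediate_value_Icc (by norm_num : (1.5:ℝ) ≤ 1.6) hcont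
  have h0 : (0:ℝ) ∈ Set.Icc (2*(1.5:ℝ)^3 - 2*1.5^2 - 3*1.5 + 2) (2*(1.6:ℝ)^3 - 2*1.6^2 - 3*1.6 + 2) := by
    constructor <;> norm_num
  obtain ⟨a, haI, hroot⟩ := hiv h0
  obtain ⟨ha1, ha2⟩ := haI
  have ha1' : (1.5:ℝ) ≤ a := ha1
  have ha2' : a ≤ (1.6:ℝ) := ha2
  refine ⟨a, ?_, by linarith, ?_⟩
  · have : Real.sqrt 2 < 1.5 := by
      rw [show (1.5:ℝ) = Real.sqrt (1.5^2) by rw [Real.sqrt_sq]; norm_num]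
      exact Real.sqrt_lt_sqrt (by norm_num) (by norm_num)
    linarith
  · intro h
    have hpos : 0 < 1 - a ^ 2 / 4 := by nlinarith
    have hh : 0 < h := Real.sqrt_pos.mpr hpos
    have hsq : h ^ 2 = 1 - a ^ 2 / 4 := Real.sq_sqrt hpos.le
    have hroot' : 2*a^3 - 2*a^2 - 3*a + 2 = 0 := hroot
    have h2 : h^2 * (a-1)^2 = a^2 * (2-a)^2 / 4 := by
      linear_combination (a-1)^2 * hsq + ((2-a)/4) * hroot'
    have heq : h * (a - 1) = a * (2 - a) / 2 := by
      nlinarith [mul_pos hh (show (0:ℝ) < a - 1 by linarith), sq_nonneg (h*(a-1) - a*(2-a)/2)]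
    have hd1 : a + h ≠ 0 := by positivity
    have hd2 : h + a / 2 ≠ 0 := by positivity
    field_simp
    ring_nf
    nlinarith [heq, hh]
end

section
/- Let μ be a real number with π/2 < μ < π, and set r = 1 − cot(μ/2), x = r·cos μ, y = r·sin μ. Then y³ + x²·y + 2x² + 2y² + 2x = 0. -/
/-- The polar curve `r = 1 − cot(μ/2)` for `π/2 < μ < π` lies on the cubic
`y³ + x²y + 2x² + 2y² + 2x = 0`. -/
theorem stmt17 (μ r x y : ℝ) (hμ1 : Real.pi / 2 < μ) (hμ2 : μ < Real.pi)
    (hr : r = 1 - Real.cot (μ / 2))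
    (hx : x = r * Real.cos μ) (hy : y = r * Real.sin μ) :
    y ^ 3 + x ^ 2 * y + 2 * x ^ 2 + 2 * y ^ 2 + 2 * x = 0 := by
  set s := Real.sin (μ / 2) with hsdef
  set c := Real.cos (μ / 2) with hcdef
  have hspos : 0 < s := by
    apply Real.sin_pos_of_pos_of_lt_pi
    · linarith [Real.pi_pos]
    · linarith [Real.pi_pos]
  have hs : s ≠ 0 := ne_of_gt hspos
  have hpyth : s ^ 2 + c ^ 2 - 1 = 0 := by
    have := Real.sin_sq_add_cos_sq (μ / 2); linarith
  have hcosμ : Real.cos μ = 1 - 2 * s ^ 2 := by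
    have h2 : μ = 2 * (μ / 2) := by ring
    rw [h2, Real.cos_two_mul]
    nlinarith [hpyth]
  have hsinμ : Real.sin μ = 2 * s * c := by
    have h2 : μ = 2 * (μ / 2) := by ring
    rw [h2, Real.sin_two_mul]
  have hcot : Real.cot (μ / 2) = c / s := Real.cot_eq_cos_div_sin _
  have hrs : r * s = s - c := by
    rw [hr, hcot]; field_simp
  have hxs : x * s = (s - c) * (1 - 2 * s ^ 2) := by
    rw [hx, hcosμ]
    linear_combination (1 - 2 * s ^ 2) * hrs
  have hys : y = 2 * c * (s - c) := by
    have h1 : y * s = 2 * c * (s - c) * s := by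
      rw [hy, hsinμ]; linear_combination 2 * c * s * hrs
    have := mul_right_cancel₀ hs h1
    exact this
  have key : (y ^ 3 + x ^ 2 * y + 2 * x ^ 2 + 2 * y ^ 2 + 2 * x) * s ^ 2 = 0 := by
    linear_combination
      ((y ^ 2 + y * (2 * c * (s - c)) + (2 * c * (s - c)) ^ 2) * s ^ 2 + x ^ 2 * s ^ 2
          + 2 * (y + 2 * c * (s - c)) * s ^ 2) * hys
        + ((2 * c * (s - c) + 2) * (x * s + (s - c) * (1 - 2 * s ^ 2)) + 2 * s) * hxs
        + (-2 * c ^ 2 + 6 * s * c - 4 * s ^ 2 + 8 * s ^ 2 * c ^ 2 - 8 * s ^ 2 * c ^ 4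
            - 16 * s ^ 3 * c + 24 * s ^ 3 * c ^ 3 + 8 * s ^ 4 - 24 * s ^ 4 * c ^ 2
            + 8 * s ^ 5 * c) * hpyth
  have hs2 : s ^ 2 ≠ 0 := pow_ne_zero _ hs
  exact (mul_eq_zero.mp key).resolve_right hs2
end
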